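/- Let η, ξ : [0,L] → ℝ be continuous, and suppose there is a continuously differentiable function R : [0,L] → ℝ with ξ(y) = R(y)η(y) for all y, such that R'(y) ≥ 0 on [0,L] and R(L) ≤ 0. Then for every continuous g : [0,L] → ℂ, the bilinear form B(g,g) = 2∫₀^L ∫₀^y ξ(y)η(z)Re(conj(g(z))·g(y)) dz dy satisfies B(g,g) ≤ 0. -/

import Mathlib

open Real Set MeasureTheory intervalIntegral

open scoped InnerProductSpace ComplexConjugate

/-!
With `F y = ∫₀^y η g`, the inner integral equals `R y * ⟪F y, η y g y⟫ = R y * (‖F‖²)' y / 2`, so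
integrating by parts turns `B(g,g)` into `R L ‖F L‖² - ∫₀^L R' ‖F‖²`, and both terms are `≤ 0`.
-/

theorem hasDerivAt_norm_sq_integral {E : Type*} [NormedAddCommGroup E] [InnerProductSpace ℝ E]
    [CompleteSpace E] {h : ℝ → E} (hh : Continuous h) (a y : ℝ) :
    HasDerivAt (fun t => ‖∫ s in a..t, h s‖ ^ 2) (2 * ⟪∫ s in a..y, h s, h y⟫_ℝ) y :=
  (integral_hasDerivAt_right (hh.intervalIntegrable _ _) (hh.stronglyMeasurableAtFilter _ _)
    hh.continuousAt).norm_sq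

theorem intervalIntegral_inner {E : Type*} [NormedAddCommGroup E] [InnerProductSpace ℝ E]
    [CompleteSpace E] {h : ℝ → E} {a b : ℝ} (hh : IntervalIntegrable h volume a b) (w : E) :
    ∫ s in a..b, ⟪w, h s⟫_ℝ = ⟪w, ∫ s in a..b, h s⟫_ℝ :=
  (innerSL ℝ w).intervalIntegral_comp_comm hh

theorem integral_mul_deriv_nonpos_of_monotone {a b : ℝ} (hab : a ≤ b) {R R' φ φ' : ℝ → ℝ}
    (hR : ∀ x ∈ Icc a b, HasDerivAt R (R' x) x) (hR' : ∀ x ∈ Icc a b, 0 ≤ R' x) (hRb : R b ≤ 0)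
    (hφ : ∀ x ∈ Icc a b, HasDerivAt φ (φ' x) x) (hφ' : IntervalIntegrable φ' volume a b)
    (hφa : φ a = 0) (hφ_nonneg : ∀ x ∈ Icc a b, 0 ≤ φ x) :
    ∫ x in a..b, R x * φ' x ≤ 0 := by
  rw [← uIcc_of_le hab] at hR hφ
  have hR'_int : IntervalIntegrable R' volume a b := by
    rw [← uIcc_of_le hab] at hR'
    exact intervalIntegrable_deriv_of_nonneg
      (fun x hx => (hR x hx).continuousAt.continuousWithinAt)
      (fun x hx => hR x (Ioo_subset_Icc_self hx)) (fun x hx => hR' x (Ioo_subset_Icc_self hx))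
  rw [integral_mul_deriv_eq_deriv_mul hR hφ hR'_int hφ', hφa, mul_zero, sub_zero,
    sub_nonpos]
  exact (mul_nonpos_of_nonpos_of_nonneg hRb (hφ_nonneg b ⟨hab, le_rfl⟩)).trans
    (integral_nonneg hab fun x hx => mul_nonneg (hR' x hx) (hφ_nonneg x hx))

theorem integral_integral_congr_of_le {a b : ℝ} (hab : a ≤ b) {f f' : ℝ → ℝ → ℝ}
    (h : ∀ y ∈ Icc a b, ∀ z ∈ Icc a y, f y z = f' y z) :
    ∫ y in a..b, ∫ z in a..y, f y z = ∫ y in a..b, ∫ z in a..y, f' y z := by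
  refine integral_congr fun y hy => integral_congr fun z hz => ?_
  rw [uIcc_of_le hab] at hy
  rw [uIcc_of_le hy.1] at hz
  exact h y hy z hz

theorem re_conj_mul_eq_inner (η : ℝ → ℝ) (g : ℝ → ℂ) (y z : ℝ) :
    η y * η z * (conj (g z) * g y).re = ⟪(η y : ℂ) * g y, (η z : ℂ) * g z⟫_ℝ := by
  simp only [Complex.inner, Complex.mul_re, Complex.mul_im, map_mul, Complex.conj_ofReal,
    Complex.conj_re, Complex.conj_im, Complex.ofReal_re, Complex.ofReal_im]
  ring

theorem two_mul_integral_integral_re_conj_mul_nonpos {a b : ℝ} (hab : a ≤ b) {η R R' : ℝ → ℝ}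
    {g : ℝ → ℂ} (hη : Continuous η) (hg : Continuous g)
    (hR : ∀ y ∈ Icc a b, HasDerivAt R (R' y) y) (hR' : ∀ y ∈ Icc a b, 0 ≤ R' y)
    (hRb : R b ≤ 0) :
    2 * ∫ y in a..b, ∫ z in a..y, R y * η y * η z * (conj (g z) * g y).re ≤ 0 := by
  set h : ℝ → ℂ := fun z => (η z : ℂ) * g z
  have hh : Continuous h := (Complex.continuous_ofReal.comp hη).mul hg
  have inner_integral (y : ℝ) :
      ∫ z in a..y, R y * η y * η z * (conj (g z) * g y).re
        = R y * ⟪∫ z in a..y, h z, h y⟫_ℝ := by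
    simp_rw [mul_assoc (R y), re_conj_mul_eq_inner η g y]
    rw [intervalIntegral.integral_const_mul, intervalIntegral_inner (hh.intervalIntegrable _ _),
      real_inner_comm]
  have hφ := hasDerivAt_norm_sq_integral hh a
  have hF : Continuous fun y => ∫ z in a..y, h z :=
    continuous_primitive (fun _ _ => hh.intervalIntegrable _ _) a
  rw [integral_congr fun y _ => inner_integral y, ← intervalIntegral.integral_const_mul]
  simp_rw [mul_left_comm (2 : ℝ)]
  exact integral_mul_deriv_nonpos_of_monotone hab hR hR' hRb (fun y _ => hφ y)
    (Continuous.intervalIntegrable (by fun_prop) _ _) (by simp) fun _ _ => by positivity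

theorem bilinear_form_nonpositive_general (L : ℝ) (hL : 0 < L)
    (eta xi R R' : ℝ → ℝ)
    (heta : ContinuousOn eta (Set.Icc 0 L))
    (hR : ∀ y ∈ Set.Icc (0:ℝ) L, HasDerivAt R (R' y) y)
    (hfac : ∀ y ∈ Set.Icc (0:ℝ) L, xi y = R y * eta y)
    (hmono : ∀ y ∈ Set.Icc (0:ℝ) L, 0 ≤ R' y)
    (hRL : R L ≤ 0)
    (g : ℝ → ℂ) (hg : ContinuousOn g (Set.Icc 0 L)) :
    2 * ∫ y in (0:ℝ)..L, ∫ z in (0:ℝ)..y,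
        xi y * eta z * ((starRingEnd ℂ) (g z) * g y).re ≤ 0 := by
  -- Extending `eta` and `g` continuously off `[0, L]` makes the primitive differentiable everywhere.
  set etaExt := IccExtend hL.le ((Icc 0 L).domRestrict eta)
  set gExt := IccExtend hL.le ((Icc 0 L).domRestrict g)
  have hExt : ∀ x ∈ Icc 0 L, etaExt x = eta x ∧ gExt x = g x := fun x hx =>
    ⟨IccExtend_of_mem _ _ hx, IccExtend_of_mem _ _ hx⟩
  rw [integral_integral_congr_of_le hL.le (f' := fun y z =>
      R y * etaExt y * etaExt z * (conj (gExt z) * gExt y).re) fun y hy z hz => by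
    obtain ⟨hηy, hgy⟩ := hExt y hy
    obtain ⟨hηz, hgz⟩ := hExt z ⟨hz.1, hz.2.trans hy.2⟩
    rw [hfac y hy, hηy, hgy, hηz, hgz]]
  exact two_mul_integral_integral_re_conj_mul_nonpos hL.le heta.domRestrict.Icc_extend'
    hg.domRestrict.Icc_extend' hR hmono hRL

theorem bilinear_form_nonpositive (L : ℝ) (hL : 0 < L)
    (eta xi R R' : ℝ → ℝ)
    (heta : ContinuousOn eta (Set.Icc 0 L))
    (hxi : ContinuousOn xi (Set.Icc 0 L))
    (hR : ∀ y ∈ Set.Icc (0:ℝ) L, HasDerivAt R (R' y) y)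
    (hR' : ContinuousOn R' (Set.Icc 0 L))
    (hfac : ∀ y ∈ Set.Icc (0:ℝ) L, xi y = R y * eta y)
    (hmono : ∀ y ∈ Set.Icc (0:ℝ) L, 0 ≤ R' y)
    (hRL : R L ≤ 0)
    (g : ℝ → ℂ) (hg : ContinuousOn g (Set.Icc 0 L)) :
    2 * ∫ y in (0:ℝ)..L, ∫ z in (0:ℝ)..y,
        xi y * eta z * ((starRingEnd ℂ) (g z) * g y).re ≤ 0 :=
  bilinear_form_nonpositive_general L hL eta xi R R' heta hR hfac hmono hRL g hg
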